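/- arXiv:1812.05877 — 2 statements merged into one kernel-verified Lean document; each statement's English description precedes it below -/
import Mathlib

section
/- Let p, q : Fin k → ℝ be probability vectors with q strictly positive and inf_l q(l) ≥ c > 0. Then ∑_l p(l) log(p(l)/q(l)) ≤ (1/c) · ∑_l (p(l) − q(l))². -/
theorem kl_le_inv_c_mul_sq {k : ℕ} (p q : Fin k → ℝ) (c : ℝ) (hc : 0 < c)
    (hp : ∀ l, 0 ≤ p l) (hps : ∑ l, p l = 1)
    (hqc : ∀ l, c ≤ q l) (hqs : ∑ l, q l = 1) :
    ∑ l, p l * Real.log (p l / q l) ≤ (1 / c) * ∑ l, (p l - q l) ^ 2 := by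
  have key : ∀ l, p l * Real.log (p l / q l) ≤ (p l - q l) ^ 2 / c + (p l - q l) := by
    intro l
    have hq : 0 < q l := lt_of_lt_of_le hc (hqc l)
    have hstep : p l * Real.log (p l / q l) ≤ (p l - q l) ^ 2 / q l + (p l - q l) := by
      rcases eq_or_lt_of_le (hp l) with h | h
      · rw [← h, zero_div, Real.log_zero, mul_zero]
        have h2 : (0 - q l) ^ 2 / q l = q l := by
          rw [zero_sub, neg_sq, sq, mul_div_assoc, div_self hq.ne', mul_one]
        rw [h2]; linarith
      · have hlog : Real.log (p l / q l) ≤ p l / q l - 1 :=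
          Real.log_le_sub_one_of_pos (div_pos h hq)
        have := mul_le_mul_of_nonneg_left hlog (hp l)
        calc p l * Real.log (p l / q l) ≤ p l * (p l / q l - 1) := this
          _ = (p l - q l) ^ 2 / q l + (p l - q l) := by field_simp; ring
    have hdiv : (p l - q l) ^ 2 / q l ≤ (p l - q l) ^ 2 / c :=
      div_le_div_of_nonneg_left (sq_nonneg _) hc (hqc l)
    linarith
  calc ∑ l, p l * Real.log (p l / q l)
      ≤ ∑ l, ((p l - q l) ^ 2 / c + (p l - q l)) := Finset.sum_le_sum fun l _ => key l
    _ = (1 / c) * ∑ l, (p l - q l) ^ 2 := by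
        rw [Finset.sum_add_distrib, Finset.sum_sub_distrib, hps, hqs, Finset.mul_sum]
        simp [div_eq_mul_inv, mul_comm]
end

section
/- Let l : ℝ^d → ℝ be twice continuously differentiable and suppose there is a symmetric PSD matrix L and κ > 0 such that ∇²l(x) ⪰ κ·L for all x (i.e., zᵀ∇²l(x)z ≥ κ·zᵀLz for all z). If x* is a global minimizer of l and x̂ is any point, then ‖x̂ − x*‖_L ≤ (1/κ)·‖∇l(x̂)‖_{L†}, where L† is the Moore–Penrose pseudoinverse, provided x̂ − x* lies in the column space of L. -/
/-!
Write `v = x̂ - x*`. Since `x*` is a critical point, the mean value theorem applied to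
`t ↦ Dl(x* + t v) v` gives `g ⬝ v = D²l(ξ)(v, v) ≥ κ ‖v‖_L²`. On the other side, `v` lies in the
column space of `L`, so `v = L† L v` and `g ⬝ v = (L† g)ᵀ L v ≤ ‖L† g‖_L ‖v‖_L` by Cauchy–Schwarz
for the semi-inner product of `L`, while `‖L† g‖_L = ‖g‖_{L†}` because `L† L L† = L†`.
Dividing `κ ‖v‖_L² ≤ ‖g‖_{L†} ‖v‖_L` by `‖v‖_L` gives the bound.
-/

open Matrix

theorem Matrix.IsSymm.dotProduct_mulVec_comm {n R : Type*} [Fintype n] [CommSemiring R]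
    {A : Matrix n n R} (hA : A.IsSymm) (x y : n → R) : x ⬝ᵥ A *ᵥ y = y ⬝ᵥ A *ᵥ x := by
  simpa only [hA.eq] using dotProduct_transpose_mulVec A x y

open scoped MatrixOrder in
theorem Matrix.PosSemidef.dotProduct_mulVec_le_sqrt_mul_sqrt {n : Type*} [Fintype n]
    {M : Matrix n n ℝ} (hM : M.PosSemidef) (a b : n → ℝ) :
    a ⬝ᵥ M *ᵥ b ≤ √(a ⬝ᵥ M *ᵥ a) * √(b ⬝ᵥ M *ᵥ b) := by
  classical
  obtain ⟨S, rfl⟩ := CStarAlgebra.nonneg_iff_eq_star_mul_self.mp hM.nonneg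
  have hS (u w : n → ℝ) : u ⬝ᵥ (star S * S) *ᵥ w = S *ᵥ u ⬝ᵥ S *ᵥ w := by
    rw [star_eq_conjTranspose, conjTranspose_eq_transpose_of_trivial, ← mulVec_mulVec,
      dotProduct_transpose_mulVec, dotProduct_comm]
  rw [hS, hS, hS]
  simpa only [dotProduct, sq] using Real.sum_mul_le_sqrt_mul_sqrt Finset.univ (S *ᵥ a) (S *ᵥ b)

structure Matrix.IsMoorePenroseInverse {m n R : Type*} [Fintype m] [Fintype n] [CommSemiring R]
    (A : Matrix m n R) (B : Matrix n m R) : Prop where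
  mul_mul_self : A * B * A = A
  mul_mul_self' : B * A * B = B
  isSymm_mul : (A * B).IsSymm
  isSymm_mul' : (B * A).IsSymm

namespace Matrix.IsMoorePenroseInverse

section Rectangular

variable {m n R : Type*} [Fintype m] [Fintype n] [CommSemiring R]
  {A : Matrix m n R} {B C : Matrix n m R}

theorem transpose (hB : A.IsMoorePenroseInverse B) : Aᵀ.IsMoorePenroseInverse Bᵀ where
  mul_mul_self := by rw [← transpose_mul, ← transpose_mul, ← Matrix.mul_assoc, hB.mul_mul_self]
  mul_mul_self' := by rw [← transpose_mul, ← transpose_mul, ← Matrix.mul_assoc, hB.mul_mul_self']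
  isSymm_mul := by rw [← transpose_mul]; exact hB.isSymm_mul'.transpose
  isSymm_mul' := by rw [← transpose_mul]; exact hB.isSymm_mul.transpose

theorem unique (hB : A.IsMoorePenroseInverse B) (hC : A.IsMoorePenroseInverse C) : B = C := by
  have hBC : B = B * A * C := calc
    B = B * (A * B)ᵀ := by rw [hB.isSymm_mul.eq, ← Matrix.mul_assoc, hB.mul_mul_self']
    _ = B * (A * C * A * B)ᵀ := by rw [hC.mul_mul_self]
    _ = B * (A * B)ᵀ * (A * C)ᵀ := by simp only [transpose_mul, Matrix.mul_assoc]
    _ = B * A * C := by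
      rw [hB.isSymm_mul.eq, hC.isSymm_mul.eq, ← Matrix.mul_assoc, ← Matrix.mul_assoc B A B,
        hB.mul_mul_self']
  have hCB : C = B * A * C := calc
    C = (C * A)ᵀ * C := by rw [hC.isSymm_mul'.eq, hC.mul_mul_self']
    _ = (C * (A * B * A))ᵀ * C := by rw [hB.mul_mul_self]
    _ = (B * A)ᵀ * (C * A)ᵀ * C := by simp only [transpose_mul, Matrix.mul_assoc]
    _ = B * A * C := by
      rw [hB.isSymm_mul'.eq, hC.isSymm_mul'.eq, Matrix.mul_assoc, Matrix.mul_assoc,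
        hC.mul_mul_self', Matrix.mul_assoc]
  rw [hBC, ← hCB]

end Rectangular

section Square

variable {n R : Type*} [Fintype n] [CommSemiring R] {A B : Matrix n n R}

theorem isSymm (hB : A.IsMoorePenroseInverse B) (hA : A.IsSymm) : B.IsSymm :=
  (hA.eq ▸ hB.transpose).unique hB

theorem mul_comm_of_isSymm (hB : A.IsMoorePenroseInverse B) (hA : A.IsSymm) : B * A = A * B := by
  rw [← hB.isSymm_mul'.eq, transpose_mul, hA.eq, (hB.isSymm hA).eq]

end Square

theorem dotProduct_le_sqrt_mul_sqrt {n : Type*} [Fintype n] {L B : Matrix n n ℝ}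
    (hB : L.IsMoorePenroseInverse B) (hL : L.PosSemidef) {v : n → ℝ} (hv : ∃ y, v = L *ᵥ y)
    (g : n → ℝ) : g ⬝ᵥ v ≤ √(g ⬝ᵥ B *ᵥ g) * √(v ⬝ᵥ L *ᵥ v) := by
  have hLsymm : L.IsSymm := isHermitian_iff_isSymm.mp hL.isHermitian
  have hBsymm : B.IsSymm := hB.isSymm hLsymm
  have hproj : B *ᵥ L *ᵥ v = v := by
    obtain ⟨y, rfl⟩ := hv
    rw [mulVec_mulVec, mulVec_mulVec, hB.mul_comm_of_isSymm hLsymm, hB.mul_mul_self]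
  have hnorm : B *ᵥ g ⬝ᵥ L *ᵥ B *ᵥ g = g ⬝ᵥ B *ᵥ g := by
    rw [dotProduct_comm, hBsymm.dotProduct_mulVec_comm, mulVec_mulVec, mulVec_mulVec,
      hB.mul_mul_self']
  calc g ⬝ᵥ v = g ⬝ᵥ B *ᵥ L *ᵥ v := by rw [hproj]
    _ = B *ᵥ g ⬝ᵥ L *ᵥ v := by rw [hBsymm.dotProduct_mulVec_comm, dotProduct_comm]
    _ ≤ √(g ⬝ᵥ B *ᵥ g) * √(v ⬝ᵥ L *ᵥ v) := by
      simpa only [hnorm] using hL.dotProduct_mulVec_le_sqrt_mul_sqrt (B *ᵥ g) v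

end Matrix.IsMoorePenroseInverse

section SecondDerivative

variable {E : Type*} [NormedAddCommGroup E] [NormedSpace ℝ E] {f : E → ℝ}

theorem ContDiff.hasDerivAt_fderiv_apply_add_smul (hf : ContDiff ℝ 2 f) (x v : E) (t : ℝ) :
    HasDerivAt (fun s : ℝ => fderiv ℝ f (x + s • v) v)
      (iteratedFDeriv ℝ 2 f (x + t • v) ![v, v]) t := by
  have hline : HasDerivAt (fun s : ℝ => x + s • v) v t := by
    simpa using ((hasDerivAt_id t).smul_const v).const_add x
  have hf' : HasFDerivAt (fderiv ℝ f) (fderiv ℝ (fderiv ℝ f) (x + t • v)) (x + t • v) :=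
    ((hf.fderiv_right (m := 1) (by norm_num)).differentiable one_ne_zero _).hasFDerivAt
  have hcomp : HasDerivAt (fun s : ℝ => fderiv ℝ f (x + s • v))
      (fderiv ℝ (fderiv ℝ f) (x + t • v) v) t := hf'.comp_hasDerivAt t hline
  simpa [iteratedFDeriv_two_apply] using hcomp.clm_apply (hasDerivAt_const t v)

theorem ContDiff.le_fderiv_add_apply_sub_fderiv_apply (hf : ContDiff ℝ 2 f) {m : ℝ} (x v : E)
    (hm : ∀ t ∈ Set.Ioo (0 : ℝ) 1, m ≤ iteratedFDeriv ℝ 2 f (x + t • v) ![v, v]) :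
    m ≤ fderiv ℝ f (x + v) v - fderiv ℝ f x v := by
  obtain ⟨c, hc, hslope⟩ := exists_hasDerivAt_eq_slope _ _ zero_lt_one
    (fun t _ => (hf.hasDerivAt_fderiv_apply_add_smul x v t).continuousAt.continuousWithinAt)
    (fun t _ => hf.hasDerivAt_fderiv_apply_add_smul x v t)
  simpa [hslope] using hm c hc

end SecondDerivative

theorem mul_sqrt_le_of_mul_le_mul_sqrt {κ q b : ℝ} (hb : 0 ≤ b) (h : κ * q ≤ b * √q) :
    κ * √q ≤ b := by
  rcases (Real.sqrt_nonneg q).eq_or_lt with hq | hq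
  · simpa [← hq] using hb
  · refine le_of_mul_le_mul_right ?_ hq
    rwa [mul_assoc, Real.mul_self_sqrt (Real.sqrt_pos.mp hq).le]

theorem m_estimator_upper_bound_general (d : ℕ)
    (l : (Fin d → ℝ) → ℝ) (hl : ContDiff ℝ 2 l)
    (L Ldag : Matrix (Fin d) (Fin d) ℝ) (hpsd : L.PosSemidef)
    (hP1 : L * Ldag * L = L) (hP2 : Ldag * L * Ldag = Ldag)
    (hP3 : (L * Ldag)ᵀ = L * Ldag) (hP4 : (Ldag * L)ᵀ = Ldag * L)
    (κ : ℝ) (hκ : 0 < κ)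
    (hhess : ∀ x z : Fin d → ℝ,
      κ * (z ⬝ᵥ (L *ᵥ z)) ≤ (iteratedFDeriv ℝ 2 l x) ![z, z])
    (xstar xhat : Fin d → ℝ) (hmin : ∀ x, l xstar ≤ l x)
    (g : Fin d → ℝ) (hg : ∀ z, fderiv ℝ l xhat z = g ⬝ᵥ z)
    (hcol : ∃ y : Fin d → ℝ, xhat - xstar = L *ᵥ y) :
    Real.sqrt ((xhat - xstar) ⬝ᵥ (L *ᵥ (xhat - xstar)))
      ≤ (1 / κ) * Real.sqrt (g ⬝ᵥ (Ldag *ᵥ g)) := by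
  have hcrit : fderiv ℝ l xstar = 0 := IsLocalMin.fderiv_eq_zero (.of_forall hmin)
  have hcurv : κ * ((xhat - xstar) ⬝ᵥ L *ᵥ (xhat - xstar)) ≤ g ⬝ᵥ (xhat - xstar) := by
    simpa [hcrit, hg] using
      hl.le_fderiv_add_apply_sub_fderiv_apply xstar (xhat - xstar) fun t _ => hhess _ _
  have hdual := (IsMoorePenroseInverse.mk hP1 hP2 hP3 hP4).dotProduct_le_sqrt_mul_sqrt
    hpsd hcol g
  rw [one_div_mul_eq_div, le_div_iff₀' hκ]
  exact mul_sqrt_le_of_mul_le_mul_sqrt (Real.sqrt_nonneg _) (hcurv.trans hdual)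

/-- Upper bound for M-estimators: if `l` is `C²` with Hessian bounded below by `κ L`
(`L` symmetric PSD, `κ > 0`), `xstar` is a global minimizer of `l`, `g` is the
gradient of `l` at `xhat`, `Ldag` is the Moore–Penrose pseudoinverse of `L`
(characterized by the four Penrose equations), and `xhat − xstar` lies in the
column space of `L`, then `‖xhat − xstar‖_L ≤ (1/κ) ‖g‖_{L†}`. -/
theorem m_estimator_upper_bound (d : ℕ)
    (l : (Fin d → ℝ) → ℝ) (hl : ContDiff ℝ 2 l)
    (L Ldag : Matrix (Fin d) (Fin d) ℝ) (hsym : L.IsSymm) (hpsd : L.PosSemidef)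
    (hP1 : L * Ldag * L = L) (hP2 : Ldag * L * Ldag = Ldag)
    (hP3 : (L * Ldag)ᵀ = L * Ldag) (hP4 : (Ldag * L)ᵀ = Ldag * L)
    (κ : ℝ) (hκ : 0 < κ)
    (hhess : ∀ x z : Fin d → ℝ,
      κ * (z ⬝ᵥ (L *ᵥ z)) ≤ (iteratedFDeriv ℝ 2 l x) ![z, z])
    (xstar xhat : Fin d → ℝ) (hmin : ∀ x, l xstar ≤ l x)
    (g : Fin d → ℝ) (hg : ∀ z, fderiv ℝ l xhat z = g ⬝ᵥ z)
    (hcol : ∃ y : Fin d → ℝ, xhat - xstar = L *ᵥ y) :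
    Real.sqrt ((xhat - xstar) ⬝ᵥ (L *ᵥ (xhat - xstar)))
      ≤ (1 / κ) * Real.sqrt (g ⬝ᵥ (Ldag *ᵥ g)) :=
  m_estimator_upper_bound_general d l hl L Ldag hpsd hP1 hP2 hP3 hP4 κ hκ hhess xstar xhat hmin g hg
    hcol
end
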